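/- Suppose q : ℕ → ℝ takes values in (0,1) and every subsequence (q_{n_k}) for which ∑_k (q_{n_k})^M < ∞ for some positive integer M has unbounded gaps (i.e., sup_k (n_{k+1} − n_k) = ∞). Then for every positive integer a and every L ≥ 1, letting q̄_n = min{q_{nL+1},…,q_{nL+L}}, the series ∑_{n=0}^∞ (q̄_n)^a diverges. -/

import Mathlib

/-! Pick in each block `{nL+1, …, nL+L}` an index where `q` attains the block minimum. These
indices form a strictly increasing sequence whose consecutive gaps are less than `2L`, and along
it `q ^ a` is exactly `qbar ^ a`; so summability of `qbar ^ a` would contradict the gap hypothesis. -/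

theorem exists_eq_csInf_of_one_le {α : Type*} [ConditionallyCompleteLinearOrder α]
    (f : ℕ → α) {L : ℕ} (hL : 1 ≤ L) :
    ∃ j, 1 ≤ j ∧ j ≤ L ∧ sInf {x | ∃ j, 1 ≤ j ∧ j ≤ L ∧ x = f j} = f j := by
  have hS : {x | ∃ j, 1 ≤ j ∧ j ≤ L ∧ x = f j} = f '' Set.Icc 1 L := by
    ext x
    simp only [Set.mem_ofPred_eq, Set.mem_image, Set.mem_Icc, and_assoc, eq_comm]
  obtain ⟨j, ⟨hj1, hjL⟩, hj⟩ : sInf (f '' Set.Icc 1 L) ∈ f '' Set.Icc 1 L :=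
    ((Set.nonempty_Icc.2 hL).image f).csInf_mem ((Set.finite_Icc 1 L).image f)
  exact ⟨j, hj1, hjL, by rw [hS, hj]⟩

section BlockIndex

variable {L : ℕ} {j : ℕ → ℕ}

theorem strictMono_mul_add_of_mem_Icc (hj1 : ∀ n, 1 ≤ j n) (hjL : ∀ n, j n ≤ L) :
    StrictMono fun n => n * L + j n := by
  refine strictMono_nat_of_lt_succ fun n => ?_
  have := hj1 (n + 1)
  have := hjL n
  rw [add_one_mul]
  omega

theorem mul_add_succ_sub_lt_of_mem_Icc (hj1 : ∀ n, 1 ≤ j n) (hjL : ∀ n, j n ≤ L) (k : ℕ) :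
    (k + 1) * L + j (k + 1) - (k * L + j k) < 2 * L := by
  have := hj1 k
  have := hjL k
  have := hjL (k + 1)
  rw [add_one_mul]
  omega

end BlockIndex

theorem block_min_diverges_of_unbounded_gaps_general
    (q : ℕ → ℝ)
    (hgaps : ∀ n : ℕ → ℕ, StrictMono n →
      (∃ M : ℕ, 1 ≤ M ∧ Summable (fun k => q (n k) ^ M)) →
      ∀ B : ℕ, ∃ k, B < n (k + 1) - n k)
    (a L : ℕ) (ha : 1 ≤ a) (hL : 1 ≤ L)
    (qbar : ℕ → ℝ)
    (hqbar : ∀ n, qbar n = sInf {x | ∃ j, 1 ≤ j ∧ j ≤ L ∧ x = q (n * L + j)}) :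
    ¬ Summable (fun n => qbar n ^ a) := by
  intro hsum
  choose j hj1 hjL hjq using fun n => exists_eq_csInf_of_one_le (fun i => q (n * L + i)) hL
  have hsum' : Summable fun k => q (k * L + j k) ^ a := by
    simpa only [hqbar, hjq] using hsum
  obtain ⟨k, hk⟩ := hgaps _ (strictMono_mul_add_of_mem_Icc hj1 hjL) ⟨a, ha, hsum'⟩ (2 * L)
  exact hk.not_gt (mul_add_succ_sub_lt_of_mem_Icc hj1 hjL k)

theorem block_min_diverges_of_unbounded_gaps
    (q : ℕ → ℝ) (hq : ∀ n, q n ∈ Set.Ioo (0 : ℝ) 1)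
    (hgaps : ∀ n : ℕ → ℕ, StrictMono n →
      (∃ M : ℕ, 1 ≤ M ∧ Summable (fun k => q (n k) ^ M)) →
      ∀ B : ℕ, ∃ k, B < n (k + 1) - n k)
    (a L : ℕ) (ha : 1 ≤ a) (hL : 1 ≤ L)
    (qbar : ℕ → ℝ)
    (hqbar : ∀ n, qbar n = sInf {x | ∃ j, 1 ≤ j ∧ j ≤ L ∧ x = q (n * L + j)}) :
    ¬ Summable (fun n => qbar n ^ a) :=
  block_min_diverges_of_unbounded_gaps_general q hgaps a L ha hL qbar hqbar
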